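/- arXiv:2011.06741 — 7 statements merged into one kernel-verified Lean document; each statement's English description precedes it below -/
import Mathlib

section
/- In the two-arm rebounding bandits instance where arm 1 has parameters (b_1, γ_1, λ_1 = 1) and arm 2 has b_2 = b_1 + (γ_2 - γ_2^T)/(1-γ_2), γ_2 ∈ (0,1), λ_2 = 1, with horizon T > 2: the policy π^n that plays arm 2 at all times t ≤ T-2, arm 1 at time T-1, and arm 2 at time T obtains cumulative expected reward exceeding that of the greedy policy (which plays arm 2 at times 1 through T-1 and then either arm at time T) by exactly γ_2 - γ_2^{T-1}. -/
/-- Cumulative expected reward of a policy over two arms in the deterministic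
rebounding bandits model. -/
noncomputable def cumReward (T : ℕ) (b lam γ : Fin 2 → ℝ) (π : ℕ → Fin 2) : ℝ :=
  ∑ t ∈ Finset.Icc 1 T,
    (b (π t) - lam (π t) *
      ∑ i ∈ Finset.Icc 1 (t-1), (γ (π t))^(t-i) * (if π i = π t then 1 else 0))

/-- Telescoping sum for the key geometric series. -/
lemma telescope (g : ℝ) (n : ℕ) :
    ∑ i ∈ Finset.Icc 1 (n+1), (g^(n+2-i) - g^(n+3-i)) = g - g^(n+2) := by
  have h := Finset.sum_range_sub (fun j => g^(n+2-j)) (n+1)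
  have hIcc : Finset.Icc 1 (n+1) = Finset.Ico 1 (n+2) := by
    ext x; simp [Finset.mem_Icc, Finset.mem_Ico]; omega
  rw [hIcc, Finset.sum_Ico_eq_sum_range]
  have hre : (n + 2 - 1) = n + 1 := by omega
  rw [hre]
  calc ∑ j ∈ Finset.range (n+1), (g^(n+2-(1+j)) - g^(n+3-(1+j)))
      = ∑ j ∈ Finset.range (n+1), (g^(n+2-(j+1)) - g^(n+2-j)) := by
        apply Finset.sum_congr rfl
        intro j hj
        simp only [Finset.mem_range] at hj
        have e1 : n+2-(1+j) = n+2-(j+1) := by omega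
        have e2 : n+3-(1+j) = n+2-j := by omega
        rw [e1, e2]
    _ = g^(n+2-(n+1)) - g^(n+2-0) := h
    _ = g - g^(n+2) := by
        have e : n+2-(n+1) = 1 := by omega
        rw [e, Nat.sub_zero, pow_one]

/-- Example 1: the greedy policy is not optimal.  Arm `0` is "arm 1" and arm
`1` is "arm 2" of the paper.  The policy playing arm 2 until `T-2`, arm 1 at
`T-1` and arm 2 at `T` beats the greedy policy (arm 2 until `T-1`, then arm 1)
by exactly `γ₂ - γ₂^(T-1)`. -/
theorem stmt4 (T : ℕ) (hT : 2 < T) (b lam γ : Fin 2 → ℝ)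
    (hγ1 : γ 0 ∈ Set.Ioo (0:ℝ) 1) (hγ2 : γ 1 ∈ Set.Ioo (0:ℝ) 1)
    (hl1 : lam 0 = 1) (hl2 : lam 1 = 1)
    (hb : b 1 = b 0 + (γ 1 - (γ 1)^T)/(1 - γ 1)) :
    cumReward T b lam γ (fun t => if t = T - 1 then 0 else 1) -
      cumReward T b lam γ (fun t => if t ≤ T - 1 then 1 else 0)
      = γ 1 - (γ 1)^(T-1) := by
  obtain ⟨m, rfl⟩ : ∃ m, T = m + 3 := ⟨T - 3, by omega⟩
  have hT1 : m + 3 - 1 = m + 2 := by omega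
  rw [hT1]
  unfold cumReward
  rw [← Finset.sum_sub_distrib]
  have hIcc : Finset.Icc 1 (m+3) = Finset.Ioc 0 (m+3) := by
    ext x; simp [Finset.mem_Icc, Finset.mem_Ioc]; omega
  rw [hIcc, ← Finset.sum_Ioc_consecutive _ (by omega : (0:ℕ) ≤ m+1) (by omega : m+1 ≤ m+3)]
  have hzero : ∑ t ∈ Finset.Ioc 0 (m+1),
      ((b (if t = m + 2 then 0 else 1) - lam (if t = m + 2 then 0 else 1) *
        ∑ i ∈ Finset.Icc 1 (t-1), (γ (if t = m + 2 then 0 else 1))^(t-i) *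
          (if (if i = m + 2 then (0:Fin 2) else 1) = (if t = m + 2 then 0 else 1) then 1 else 0)) -
       (b (if t ≤ m + 2 then 1 else 0) - lam (if t ≤ m + 2 then 1 else 0) *
        ∑ i ∈ Finset.Icc 1 (t-1), (γ (if t ≤ m + 2 then 1 else 0))^(t-i) *
          (if (if i ≤ m + 2 then (1:Fin 2) else 0) = (if t ≤ m + 2 then 1 else 0) then 1 else 0))) = 0 := by
    apply Finset.sum_eq_zero
    intro t ht
    simp only [Finset.mem_Ioc] at ht
    have h2 : t ≠ m + 2 := by omega
    have h3 : t ≤ m + 2 := by omega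
    rw [if_neg h2, if_pos h3, sub_eq_zero]
    congr 1
    congr 1
    apply Finset.sum_congr rfl
    intro i hi
    simp only [Finset.mem_Icc] at hi
    have hi2 : i ≠ m + 2 := by omega
    have hi3 : i ≤ m + 2 := by omega
    rw [if_neg hi2, if_pos hi3]
  rw [hzero, zero_add]
  have hpair : Finset.Ioc (m+1) (m+3) = {m+2, m+3} := by
    ext x; simp [Finset.mem_Ioc, Finset.mem_insert]; omega
  rw [hpair, Finset.sum_insert (by simp), Finset.sum_singleton]
  -- term at t = m+2
  have e1 : m + 2 - 1 = m + 1 := by omega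
  have e2 : m + 3 - 1 = m + 2 := by omega
  have c1 : (if m+2 = m+2 then (0:Fin 2) else 1) = 0 := if_pos rfl
  have c2 : (if m+2 ≤ m+2 then (1:Fin 2) else 0) = 1 := if_pos (le_refl _)
  have c3 : (if m+3 = m+2 then (0:Fin 2) else 1) = 1 := if_neg (by omega)
  have c4 : (if m+3 ≤ m+2 then (1:Fin 2) else 0) = 0 := if_neg (by omega)
  beta_reduce
  rw [c1, c2, c3, c4, e1, e2]
  have sA1 : ∑ i ∈ Finset.Icc 1 (m+1), (γ 0)^(m+2-i) *
      (if (if i = m + 2 then (0:Fin 2) else 1) = 0 then 1 else 0) = 0 := by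
    apply Finset.sum_eq_zero
    intro i hi
    simp only [Finset.mem_Icc] at hi
    rw [if_neg (by omega : ¬ i = m + 2)]
    norm_num
  have sB1 : ∑ i ∈ Finset.Icc 1 (m+1), (γ 1)^(m+2-i) *
      (if (if i ≤ m + 2 then (1:Fin 2) else 0) = 1 then 1 else 0)
      = ∑ i ∈ Finset.Icc 1 (m+1), (γ 1)^(m+2-i) := by
    apply Finset.sum_congr rfl
    intro i hi
    simp only [Finset.mem_Icc] at hi
    rw [if_pos (by omega : i ≤ m + 2)]
    norm_num
  have sA2 : ∑ i ∈ Finset.Icc 1 (m+2), (γ 1)^(m+3-i) *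
      (if (if i = m + 2 then (0:Fin 2) else 1) = 1 then 1 else 0)
      = ∑ i ∈ Finset.Icc 1 (m+1), (γ 1)^(m+3-i) := by
    rw [Finset.sum_Icc_succ_top (by omega : 1 ≤ m + 2)]
    rw [if_pos (rfl : m + 2 = m + 2)]
    have htop : (γ 1)^(m+3-(m+2)) * (if (0:Fin 2) = 1 then (1:ℝ) else 0) = 0 := by norm_num
    rw [htop, add_zero]
    apply Finset.sum_congr rfl
    intro i hi
    simp only [Finset.mem_Icc] at hi
    rw [if_neg (by omega : ¬ i = m + 2)]
    norm_num
  have sB2 : ∑ i ∈ Finset.Icc 1 (m+2), (γ 0)^(m+3-i) *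
      (if (if i ≤ m + 2 then (1:Fin 2) else 0) = 0 then 1 else 0) = 0 := by
    apply Finset.sum_eq_zero
    intro i hi
    simp only [Finset.mem_Icc] at hi
    rw [if_pos (by omega : i ≤ m + 2)]
    norm_num
  rw [sA1, sB1, sA2, sB2, hl1, hl2]
  have key := telescope (γ 1) m
  rw [Finset.sum_sub_distrib] at key
  linarith [key]
end

section
/- Let K_T be the complete graph on vertex set [T] = {1,...,T} with edge weights e(i,j) = λ γ^{|j-i|} for i ≠ j, where γ ∈ [0,1) and λ ≥ 0. Then the partition of [T] into K parts given by P_k = {t ∈ [T] : t ≡ k (mod K)} maximizes, over all partitions of [T] into K parts, the total weight of edges whose endpoints lie in different parts (i.e., it is an exact Max K-Cut of K_T). -/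
/-!
The cut value is the total weight minus the weight `∑ γ^(j-i)` of the monochromatic pairs
`i < j`. On `1 ≤ d ≤ T` the weight `γ^d` is a nonnegative combination of the constant `1` and
the tents `d ↦ (e + 1 - d)⁺`, and the tent-weighted number of monochromatic pairs is the sum,
over all windows of `e + 1` consecutive integers, of the number of monochromatic pairs in the
window. So it suffices to show that the residue colouring has the fewest monochromatic pairs in
every window of consecutive integers. In a window of size `s`, a colouring with classes of sizes
`n_k` has `∑ₖ (n_k choose 2) = ∑ₖ ∑_{r ≥ 1} (n_k - r)⁺ ≥ ∑_{r ≥ 1} (s - r K)⁺` monochromatic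
pairs, and the residue colouring attains this bound: its monochromatic pairs are those at
distance `r K`, and there are `(s - r K)⁺` of them for each `r`.
-/

/-- Total weight of edges of the complete graph on `{1, …, T}` with weights
`e(i,j) = λ γ^{|j-i|}` that cross the partition induced by the labeling `c`. -/
noncomputable def cutValue (T : ℕ) (lam γ : ℝ) (c : ℕ → ℕ) : ℝ :=
  ∑ j ∈ Finset.Icc 1 T, ∑ i ∈ Finset.Icc 1 (j-1),
    if c i ≠ c j then lam * γ^(j-i) else 0

open Finset

lemma Nat.choose_two_eq_sum_Icc_tsub {n m : ℕ} (h : n ≤ m + 1) :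
    n.choose 2 = ∑ r ∈ Icc 1 m, (n - r) := by
  induction n with
  | zero => simp
  | succ n ih =>
    have hsplit : ∀ r ∈ Icc 1 m, n + 1 - r = (n - r) + if r ≤ n then 1 else 0 := by
      intro r hr
      split_ifs <;> omega
    have hfilter : {r ∈ Icc 1 m | r ≤ n} = Icc 1 n := by
      ext r
      simp only [mem_filter, mem_Icc]
      omega
    rw [Nat.choose_succ_succ', Nat.choose_one_right, ih (by omega), sum_congr rfl hsplit,
      sum_add_distrib, sum_boole, hfilter, Nat.card_Icc, Nat.cast_id, Nat.add_sub_cancel,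
      add_comm n]

/- The expansion `γ ^ d = ∑_{e ≥ 1} (1 - γ)² γ ^ e (e + 1 - d)⁺` truncated after `e = E`,
with the tail summed in closed form. -/
lemma pow_eq_tent_expansion (γ : ℝ) {d E : ℕ} (hd : 1 ≤ d) (hdE : d ≤ E + 1) :
    γ ^ d = (1 - γ) ^ 2 * ∑ e ∈ Icc 1 E, γ ^ e * ((e + 1 - d : ℕ) : ℝ)
      + (1 - γ) * γ ^ (E + 1) * ((E + 1 + 1 - d : ℕ) : ℝ) + γ ^ (E + 2) := by
  induction E, (show d - 1 ≤ E by omega) using Nat.le_induction with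
  | base =>
    rw [sum_eq_zero fun e he => by rw [mem_Icc] at he; rw [Nat.sub_eq_zero_of_le (by omega)]; simp,
      Nat.sub_add_cancel hd, show d + 1 - d = 1 by omega, show d - 1 + 2 = d + 1 by omega]
    push_cast
    ring
  | succ E hE ih =>
    rw [sum_Icc_succ_top (by omega), ih (by omega),
      show E + 1 + 1 + 1 - d = (E + 1 + 1 - d) + 1 by omega]
    push_cast
    ring

section MonoPairs

variable {α β β' : Type*} [LinearOrder α] [DecidableEq β] [DecidableEq β']

def monoPairs (c : α → β) (s : Finset α) : Finset (α × α) :=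
  {p ∈ s ×ˢ s | p.1 < p.2 ∧ c p.1 = c p.2}

lemma card_monoPairs_eq_sum_choose (c : α → β) (s : Finset α) {C : Finset β}
    (hc : ∀ x ∈ s, c x ∈ C) :
    #(monoPairs c s) = ∑ k ∈ C, (#{x ∈ s | c x = k}).choose 2 := by
  rw [card_eq_sum_card_fiberwise (f := fun p => c p.1) (t := C)]
  · refine sum_congr rfl fun k _ => ?_
    rw [← card_product_filter_lt]
    congr 1
    ext p
    simp only [monoPairs, mem_filter, mem_product]
    grind
  · intro p hp
    simp only [monoPairs, mem_coe, mem_filter, mem_product] at hp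
    exact hc p.1 hp.1.1

theorem sum_Icc_tsub_mul_le_card_monoPairs (c : α → β) (s : Finset α) {C : Finset β}
    (hc : ∀ x ∈ s, c x ∈ C) :
    ∑ r ∈ Icc 1 #s, (#s - r * #C) ≤ #(monoPairs c s) := by
  set n : β → ℕ := fun k => #{x ∈ s | c x = k}
  have hn : ∀ k, n k ≤ #s := fun k => card_filter_le _ _
  rw [card_monoPairs_eq_sum_choose c s hc,
    sum_congr rfl fun k _ => Nat.choose_two_eq_sum_Icc_tsub (Nat.le_succ_of_le (hn k)), sum_comm]
  refine sum_le_sum fun r _ => ?_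
  have hpartition : #s = ∑ k ∈ C, n k := card_eq_sum_card_fiberwise hc
  have hsplit : ∑ k ∈ C, n k ≤ ∑ k ∈ C, (n k - r) + r * #C :=
    calc ∑ k ∈ C, n k ≤ ∑ k ∈ C, ((n k - r) + r) := sum_le_sum fun k _ => le_tsub_add
      _ = ∑ k ∈ C, (n k - r) + r * #C := by rw [sum_add_distrib, sum_const, smul_eq_mul, mul_comm]
  omega

theorem card_monoPairs_Icc_le_of_modEq {K a b : ℕ} {c : ℕ → β}
    (hc : ∀ i ∈ Icc a b, ∀ j ∈ Icc a b, c i = c j → i ≡ j [MOD K]) :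
    #(monoPairs c (Icc a b)) ≤ ∑ r ∈ Icc 1 #(Icc a b), (#(Icc a b) - r * K) := by
  have hdvd : ∀ p ∈ monoPairs c (Icc a b), K ∣ p.2 - p.1 ∧ p.1 < p.2 ∧ a ≤ p.1 ∧ p.2 ≤ b := by
    intro p hp
    simp only [monoPairs, mem_filter, mem_product] at hp
    obtain ⟨⟨h1, h2⟩, hlt, hcp⟩ := hp
    exact ⟨(Nat.modEq_iff_dvd' hlt.le).mp (hc _ h1 _ h2 hcp), hlt, (mem_Icc.mp h1).1,
      (mem_Icc.mp h2).2⟩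
  have hcount : ∑ r ∈ Icc 1 #(Icc a b), (#(Icc a b) - r * K)
      = #((Icc 1 #(Icc a b)).sigma fun r => Icc 1 (#(Icc a b) - r * K)) := by
    simp only [card_sigma, Nat.card_Icc, Nat.add_sub_cancel]
  rw [hcount]
  refine card_le_card_of_injOn (fun p => ⟨(p.2 - p.1) / K, p.1 + 1 - a⟩) (fun p hp => ?_)
    (fun p hp q hq hpq => ?_)
  · obtain ⟨hK, hlt, ha, hb⟩ := hdvd p hp
    have hKpos := Nat.pos_of_dvd_of_pos hK (Nat.sub_pos_of_lt hlt)
    obtain ⟨m, hm⟩ := hK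
    have hm1 : 0 < m := Nat.pos_of_ne_zero fun h => by simp [h] at hm; omega
    have hmK : m ≤ m * K := Nat.le_mul_of_pos_right m hKpos
    simp only [mem_coe, mem_sigma, mem_Icc, Nat.card_Icc, hm, Nat.mul_div_cancel_left m hKpos]
    rw [mul_comm] at hm
    omega
  · obtain ⟨⟨m, hm⟩, hltp, hap, -⟩ := hdvd p hp
    obtain ⟨⟨n, hn⟩, hltq, haq, -⟩ := hdvd q hq
    have hKpos := Nat.pos_of_dvd_of_pos ⟨m, hm⟩ (Nat.sub_pos_of_lt hltp)
    simp only [Sigma.mk.injEq, heq_eq_eq, hm, hn, Nat.mul_div_cancel_left _ hKpos] at hpq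
    rw [hpq.1] at hm
    ext <;> omega

theorem card_monoPairs_Icc_le_card_monoPairs {a b : ℕ} {c₀ : ℕ → β} {c : ℕ → β'}
    {C : Finset β'} (hc₀ : ∀ i ∈ Icc a b, ∀ j ∈ Icc a b, c₀ i = c₀ j → i ≡ j [MOD #C])
    (hc : ∀ t ∈ Icc a b, c t ∈ C) :
    #(monoPairs c₀ (Icc a b)) ≤ #(monoPairs c (Icc a b)) :=
  (card_monoPairs_Icc_le_of_modEq hc₀).trans (sum_Icc_tsub_mul_le_card_monoPairs c _ hc)

def tentCount (c : ℕ → β) (T e : ℕ) : ℕ :=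
  ∑ p ∈ monoPairs c (Icc 1 T), (e + 1 - (p.2 - p.1))

lemma monoPairs_window (c : ℕ → β) (T e u : ℕ) :
    monoPairs c (Icc (max 1 (u - e)) (min T u))
      = {p ∈ monoPairs c (Icc 1 T) | p.2 ≤ u ∧ u ≤ p.1 + e} := by
  ext p
  simp only [monoPairs, mem_filter, mem_product, mem_Icc]
  grind

lemma tentCount_eq_sum_card_monoPairs_window (c : ℕ → β) (T e : ℕ) :
    tentCount c T e
      = ∑ u ∈ range (T + e + 1), #(monoPairs c (Icc (max 1 (u - e)) (min T u))) := by
  simp only [monoPairs_window, card_filter]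
  rw [sum_comm, tentCount]
  refine sum_congr rfl fun p hp => ?_
  simp only [monoPairs, mem_filter, mem_product, mem_Icc] at hp
  have hwindows : {u ∈ range (T + e + 1) | p.2 ≤ u ∧ u ≤ p.1 + e} = Icc p.2 (p.1 + e) := by
    ext u
    simp only [mem_filter, mem_range, mem_Icc]
    omega
  rw [← card_filter, hwindows, Nat.card_Icc]
  omega

theorem tentCount_le_tentCount {T : ℕ} {c₀ : ℕ → β} {c : ℕ → β'} {C : Finset β'}
    (hc₀ : ∀ i ∈ Icc 1 T, ∀ j ∈ Icc 1 T, c₀ i = c₀ j → i ≡ j [MOD #C])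
    (hc : ∀ t ∈ Icc 1 T, c t ∈ C) (e : ℕ) :
    tentCount c₀ T e ≤ tentCount c T e := by
  simp only [tentCount_eq_sum_card_monoPairs_window]
  refine sum_le_sum fun u _ => ?_
  have hsub : Icc (max 1 (u - e)) (min T u) ⊆ Icc 1 T :=
    Icc_subset_Icc (le_max_left _ _) (min_le_left _ _)
  exact card_monoPairs_Icc_le_card_monoPairs (fun i hi j hj => hc₀ i (hsub hi) j (hsub hj))
    fun t ht => hc t (hsub ht)

lemma sum_monoPairs_pow_eq (c : ℕ → β) (T : ℕ) (γ : ℝ) :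
    ∑ p ∈ monoPairs c (Icc 1 T), γ ^ (p.2 - p.1)
      = (1 - γ) ^ 2 * ∑ e ∈ Icc 1 T, γ ^ e * (tentCount c T e : ℝ)
        + (1 - γ) * γ ^ (T + 1) * (tentCount c T (T + 1) : ℝ)
        + γ ^ (T + 2) * (#(monoPairs c (Icc 1 T)) : ℝ) := by
  have hexpand : ∀ p ∈ monoPairs c (Icc 1 T), γ ^ (p.2 - p.1) = _ := fun p hp => by
    simp only [monoPairs, mem_filter, mem_product, mem_Icc] at hp
    exact pow_eq_tent_expansion γ (E := T) (show 1 ≤ p.2 - p.1 by omega) (by omega)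
  rw [sum_congr rfl hexpand]
  simp only [tentCount, Nat.cast_sum, mul_sum, sum_add_distrib, card_eq_sum_ones, Nat.cast_one,
    mul_one]
  rw [sum_comm]

end MonoPairs

lemma sum_Icc_Icc_pred_eq_sum_filter_lt {M : Type*} [AddCommMonoid M] (T : ℕ)
    (f : ℕ → ℕ → M) :
    ∑ j ∈ Icc 1 T, ∑ i ∈ Icc 1 (j - 1), f i j
      = ∑ p ∈ {p ∈ Icc 1 T ×ˢ Icc 1 T | p.1 < p.2}, f p.1 p.2 := by
  rw [sum_filter, sum_product_right]
  refine sum_congr rfl fun j hj => ?_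
  rw [← sum_filter]
  congr 1
  ext i
  simp only [mem_Icc, mem_filter] at hj ⊢
  omega

lemma cutValue_eq_mul_sub (T : ℕ) (lam γ : ℝ) (c : ℕ → ℕ) :
    cutValue T lam γ c = lam * (∑ p ∈ {p ∈ Icc 1 T ×ˢ Icc 1 T | p.1 < p.2}, γ ^ (p.2 - p.1)
      - ∑ p ∈ monoPairs c (Icc 1 T), γ ^ (p.2 - p.1)) := by
  rw [cutValue, sum_Icc_Icc_pred_eq_sum_filter_lt, monoPairs, ← filter_filter,
    sum_filter fun p : ℕ × ℕ => c p.1 = c p.2, ← sum_sub_distrib, mul_sum]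
  refine sum_congr rfl fun p _ => ?_
  by_cases h : c p.1 = c p.2 <;> simp [h]

theorem stmt7_general (T K : ℕ) (lam γ : ℝ)
    (hγ : γ ∈ Set.Ico (0:ℝ) 1) (hlam : 0 ≤ lam)
    (c : ℕ → ℕ) (hc : ∀ t ∈ Finset.Icc 1 T, c t ∈ Finset.Icc 1 K) :
    cutValue T lam γ c ≤ cutValue T lam γ (fun t => (t-1) % K + 1) := by
  obtain ⟨hγ0, hγ1⟩ := hγ
  have hresidue : ∀ i ∈ Icc 1 T, ∀ j ∈ Icc 1 T,
      (i - 1) % K + 1 = (j - 1) % K + 1 → i ≡ j [MOD #(Icc 1 K)] := by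
    intro i hi j hj hij
    rw [Nat.card_Icc, Nat.add_sub_cancel]
    have hij' : i - 1 + 1 ≡ j - 1 + 1 [MOD K] := Nat.ModEq.add_right 1 (Nat.add_right_cancel hij)
    rwa [Nat.sub_add_cancel (mem_Icc.mp hi).1, Nat.sub_add_cancel (mem_Icc.mp hj).1] at hij'
  have htent := tentCount_le_tentCount hresidue hc
  have hcard := card_monoPairs_Icc_le_card_monoPairs hresidue hc
  have h1γ : 0 ≤ 1 - γ := by linarith
  rw [cutValue_eq_mul_sub, cutValue_eq_mul_sub, sum_monoPairs_pow_eq, sum_monoPairs_pow_eq]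
  gcongr <;> exact htent _

/-- The partition `P_k = {t : t ≡ k (mod K)}` is an exact Max K-Cut of the
complete graph `K_T` with edge weights `λ γ^{|j-i|}`. -/
theorem stmt7 (T K : ℕ) (hK : 0 < K) (lam γ : ℝ)
    (hγ : γ ∈ Set.Ico (0:ℝ) 1) (hlam : 0 ≤ lam)
    (c : ℕ → ℕ) (hc : ∀ t ∈ Finset.Icc 1 T, c t ∈ Finset.Icc 1 K) :
    cutValue T lam γ c ≤ cutValue T lam γ (fun t => (t-1) % K + 1) :=
  stmt7_general T K lam γ hγ hlam c hc
end

section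
/- With identical arm parameters (γ, λ, b) for all K arms, maximizing the cumulative reward Σ_{k=1}^K Σ_{t=1}^T u_{k,t}(b - λ Σ_{i=1}^{t-1} γ^{t-i} u_{k,i}) over assignments u with Σ_k u_{k,t} = 1 for each t is equivalent to: T·b minus the total edge weight of K_T, plus the maximum over partitions P_1,...,P_K of [T] of the total cross-partition edge weight Σ_{k < k'} Σ_{t ∈ P_k, i ∈ P_{k'}, i < t} λ γ^{t-i}. -/
/-- Cumulative reward of the assignment sending time `t` to arm `c t`
(identical arm parameters); time `t : Fin T` represents time step `t+1`. -/
noncomputable def reward8 (T K : ℕ) (b lam γ : ℝ) (c : Fin T → Fin K) : ℝ :=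
  ∑ t : Fin T,
    (b - lam * ∑ i ∈ Finset.univ.filter (fun i => i < t),
      γ^(t.val - i.val) * (if c i = c t then 1 else 0))

/-- Total edge weight of the complete graph `K_T` with weights `λ γ^{|j-i|}`. -/
noncomputable def totalWeight8 (T : ℕ) (lam γ : ℝ) : ℝ :=
  ∑ t : Fin T, ∑ i ∈ Finset.univ.filter (fun i => i < t), lam * γ^(t.val - i.val)

/-- Cross-partition edge weight of the partition induced by `c`. -/
noncomputable def crossWeight8 (T K : ℕ) (lam γ : ℝ) (c : Fin T → Fin K) : ℝ :=
  ∑ t : Fin T, ∑ i ∈ Finset.univ.filter (fun i => i < t),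
    if c i ≠ c t then lam * γ^(t.val - i.val) else 0

/-- With identical arm parameters, maximizing the cumulative reward is
equivalent to `T·b` minus the total edge weight of `K_T` plus the maximum
cross-partition weight (Max K-Cut). -/
theorem stmt8 (T K : ℕ) (hK : 0 < K) (b lam γ : ℝ)
    (hγ : γ ∈ Set.Ico (0:ℝ) 1) (hlam : 0 ≤ lam) :
    (⨆ c : Fin T → Fin K, reward8 T K b lam γ c) =
      T * b - totalWeight8 T lam γ + ⨆ c : Fin T → Fin K, crossWeight8 T K lam γ c := by
  have hne : Nonempty (Fin T → Fin K) := ⟨fun _ => ⟨0, hK⟩⟩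
  have key : ∀ c : Fin T → Fin K,
      reward8 T K b lam γ c =
        T * b - totalWeight8 T lam γ + crossWeight8 T K lam γ c := by
    intro c
    unfold reward8 totalWeight8 crossWeight8
    have : ∀ t : Fin T,
        b - lam * ∑ i ∈ Finset.univ.filter (fun i => i < t),
            γ^(t.val - i.val) * (if c i = c t then 1 else 0) =
        b - (∑ i ∈ Finset.univ.filter (fun i => i < t), lam * γ^(t.val - i.val)) +
          ∑ i ∈ Finset.univ.filter (fun i => i < t),
            (if c i ≠ c t then lam * γ^(t.val - i.val) else 0) := by
      intro t
      rw [Finset.mul_sum]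
      have hA : ∀ i ∈ Finset.univ.filter (fun i => i < t),
          lam * (γ^(t.val - i.val) * (if c i = c t then 1 else 0)) =
            lam * γ^(t.val - i.val) - (if c i ≠ c t then lam * γ^(t.val - i.val) else 0) := by
        intro i _
        by_cases h : c i = c t <;> simp [h]
      rw [Finset.sum_congr rfl hA, Finset.sum_sub_distrib]
      ring
    rw [Finset.sum_congr rfl (fun t _ => this t)]
    rw [Finset.sum_add_distrib, Finset.sum_sub_distrib, Finset.sum_const]
    simp [mul_comm]
  calc (⨆ c : Fin T → Fin K, reward8 T K b lam γ c)
      = ⨆ c : Fin T → Fin K, (T * b - totalWeight8 T lam γ + crossWeight8 T K lam γ c) := by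
        exact iSup_congr key
    _ = T * b - totalWeight8 T lam γ + ⨆ c : Fin T → Fin K, crossWeight8 T K lam γ c := by
        have hbdd : BddAbove (Set.range fun c : Fin T → Fin K => crossWeight8 T K lam γ c) :=
          (Set.finite_range _).bddAbove
        exact (add_ciSup hbdd _).symm
end

section
/- Let π* be an optimal policy for horizon T in the deterministic rebounding bandits problem, and let π^w be the w-lookahead policy for window size w ≤ T. Then G_T(π*) - G_T(π^w) ≤ ⌈T/w⌉ · λ̄ γ̄ (1 - γ̄^{T-w}) / (1 - γ̄)^2, where γ̄ = max_k γ_k ∈ [0,1) and λ̄ = max_k λ_k. -/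
lemma geomEq (x : ℝ) (hx1 : x < 1) (n : ℕ) :
    ∑ j ∈ Finset.range n, x^j = (1 - x^n)/(1-x) := by
  rw [geom_sum_eq (ne_of_lt hx1)]
  have h : x - 1 ≠ 0 := by intro h; apply absurd hx1; simp [sub_eq_zero] at h; simp [h]
  have h2 : (1:ℝ) - x ≠ 0 := by intro h2; apply h; linarith [sub_eq_zero.mp h2]
  field_simp
  ring

lemma Bbound (x : ℝ) (hx0 : 0 ≤ x) (hx1 : x < 1) (m t : ℕ) (hmt : m < t) :
    ∑ s ∈ Finset.Icc 1 m, x^(t-s) ≤ x^(t-m)/(1-x) := by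
  have hden : (0:ℝ) < 1 - x := by linarith
  have h1 : Finset.Icc 1 m = Finset.Ico 1 (m+1) := by rw [Finset.Ico_add_one_right_eq_Icc]
  rw [h1, Finset.sum_Ico_eq_sum_range]
  simp only [Nat.add_sub_cancel]
  have h2 : ∀ j ∈ Finset.range m, x^(t-(1+j)) = x^(t-m) * x^(m-1-j) := by
    intro j hj
    rw [Finset.mem_range] at hj
    rw [← pow_add]
    congr 1
    omega
  rw [Finset.sum_congr rfl h2, ← Finset.mul_sum,
     Finset.sum_range_reflect (fun j => x^j) m, geomEq x hx1]
  rw [div_eq_mul_inv, div_eq_mul_inv]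
  apply mul_le_mul_of_nonneg_left _ (pow_nonneg hx0 _)
  apply mul_le_of_le_one_left (inv_nonneg.mpr hden.le)
  nlinarith [pow_nonneg hx0 m]

lemma Tbound (x : ℝ) (hx1 : x < 1) (m e : ℕ) :
    ∑ t ∈ Finset.Ioc m e, x^(t-m) = x * (1 - x^(e-m))/(1-x) := by
  have h1 : Finset.Ioc m e = Finset.Ico (m+1) (e+1) := by
    rw [Finset.Ico_add_one_right_eq_Icc, Finset.Icc_add_one_left_eq_Ioc]
  rw [h1, Finset.sum_Ico_eq_sum_range]
  have h2 : e + 1 - (m+1) = e - m := by omega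
  rw [h2]
  have h3 : ∀ j ∈ Finset.range (e-m), x^(m+1+j-m) = x * x^j := by
    intro j hj; rw [← pow_succ']
    congr 1; omega
  rw [Finset.sum_congr rfl h3, ← Finset.mul_sum, geomEq x hx1, mul_div_assoc]

/-- Expected reward obtained by policy `π` at time `t` (arms are `1, …, K`). -/
noncomputable def muReward (b lam γ : ℕ → ℝ) (π : ℕ → ℕ) (t : ℕ) : ℝ :=
  b (π t) - lam (π t) *
    ∑ i ∈ Finset.Icc 1 (t-1), (γ (π t))^(t-i) * (if π i = π t then 1 else 0)

/-- Cumulative expected reward of policy `π` over horizon `T`. -/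
noncomputable def cumG (b lam γ : ℕ → ℝ) (π : ℕ → ℕ) (T : ℕ) : ℝ :=
  ∑ t ∈ Finset.Icc 1 T, muReward b lam γ π t

/-- Optimality gap of the `w`-lookahead policy:
`G_T(π*) - G_T(π^w) ≤ ⌈T/w⌉ · λ̄ γ̄ (1 - γ̄^{T-w}) / (1 - γ̄)²`. -/
theorem stmt9 (K T w : ℕ) (hw : 0 < w) (hwT : w ≤ T)
    (b lam γ : ℕ → ℝ) (γbar lamBar : ℝ)
    (hγk : ∀ k ∈ Finset.Icc 1 K, 0 ≤ γ k ∧ γ k ≤ γbar)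
    (hγbar : γbar ∈ Set.Ico (0:ℝ) 1)
    (hlamk : ∀ k ∈ Finset.Icc 1 K, 0 ≤ lam k ∧ lam k ≤ lamBar)
    (πstar πw : ℕ → ℕ)
    (hstarValid : ∀ t ∈ Finset.Icc 1 T, πstar t ∈ Finset.Icc 1 K)
    (hwValid : ∀ t ∈ Finset.Icc 1 T, πw t ∈ Finset.Icc 1 K)
    -- π* is optimal for the horizon-T problem
    (hopt : ∀ π : ℕ → ℕ, (∀ t ∈ Finset.Icc 1 T, π t ∈ Finset.Icc 1 K) →
      cumG b lam γ π T ≤ cumG b lam γ πstar T)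
    -- πw is the w-lookahead policy: on each block it maximizes the block
    -- reward among all policies agreeing with it on the past
    (hlook : ∀ i ∈ Finset.Icc 1 ((T + w - 1) / w), ∀ π : ℕ → ℕ,
      (∀ t ∈ Finset.Icc 1 T, π t ∈ Finset.Icc 1 K) →
      (∀ t ∈ Finset.Icc 1 (min ((i-1)*w) T), π t = πw t) →
      ∑ t ∈ Finset.Icc (min ((i-1)*w) T + 1) (min (i*w) T), muReward b lam γ π t ≤
        ∑ t ∈ Finset.Icc (min ((i-1)*w) T + 1) (min (i*w) T), muReward b lam γ πw t) :
    cumG b lam γ πstar T - cumG b lam γ πw T ≤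
      (((T + w - 1) / w : ℕ) : ℝ) * (lamBar * γbar * (1 - γbar^(T-w)) / (1 - γbar)^2) := by
  obtain ⟨hγ0, hγ1⟩ := hγbar
  have hden : (0:ℝ) < 1 - γbar := by linarith
  have hK : 1 ≤ K := by
    have h1 := hstarValid 1 (Finset.mem_Icc.mpr ⟨le_rfl, by omega⟩)
    rw [Finset.mem_Icc] at h1; omega
  have h1K : (1:ℕ) ∈ Finset.Icc 1 K := Finset.mem_Icc.mpr ⟨le_rfl, hK⟩
  have hlam0 : 0 ≤ lamBar := le_trans (hlamk 1 h1K).1 (hlamk 1 h1K).2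
  have hpowTw : γbar ^ (T - w) ≤ 1 := pow_le_one₀ hγ0 hγ1.le
  set C := lamBar * γbar * (1 - γbar^(T-w)) / (1 - γbar)^2 with hC
  have hC0 : 0 ≤ C := by
    apply div_nonneg _ (sq_nonneg _)
    apply mul_nonneg (mul_nonneg hlam0 hγ0); linarith
  set N := (T + w - 1) / w with hNdef
  have hTN : T ≤ N * w := by
    rw [mul_comm]
    have h := Nat.div_add_mod (T + w - 1) w
    rw [← hNdef] at h
    have h2 : (T + w - 1) % w < w := Nat.mod_lt _ hw
    generalize (T + w - 1) % w = r at h h2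
    generalize w * N = M at h ⊢
    omega
  have hNwUB : N * w ≤ T + w - 1 := by
    rw [mul_comm]
    have h := Nat.div_add_mod (T + w - 1) w
    rw [← hNdef] at h
    generalize (T + w - 1) % w = r at h
    generalize w * N = M at h ⊢
    omega
  have hblockLt : ∀ i, 1 ≤ i → i ≤ N → (i-1) * w < T := by
    intro i h1i hiN
    calc (i-1)*w ≤ (N-1)*w := Nat.mul_le_mul_right w (by omega)
      _ = N*w - w := by rw [Nat.sub_mul, one_mul]
      _ < T := by
        generalize N * w = M at hNwUB ⊢
        omega
  -- block decomposition
  set g : ℕ → ℕ := fun j => min (j*w) T with hg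
  have hgm : ∀ a b' : ℕ, a ≤ b' → g a ≤ g b' := fun a b' hab =>
    min_le_min (Nat.mul_le_mul_right w hab) le_rfl
  have hdecomp : ∀ f : ℕ → ℝ,
      ∑ i ∈ Finset.Icc 1 N, ∑ t ∈ Finset.Ioc (g (i-1)) (g i), f t
        = ∑ t ∈ Finset.Icc 1 T, f t := by
    intro f
    have key : ∀ n : ℕ, ∑ i ∈ Finset.Icc 1 n, ∑ t ∈ Finset.Ioc (g (i-1)) (g i), f t
        = ∑ t ∈ Finset.Ioc (g 0) (g n), f t := by
      intro n
      induction n with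
      | zero => simp
      | succ n ih =>
        rw [Finset.sum_Icc_succ_top (by omega), ih]
        have hn : n + 1 - 1 = n := by omega
        rw [hn]
        exact Finset.sum_Ioc_consecutive f (hgm 0 n (by omega)) (hgm n (n+1) (by omega))
    rw [key N]
    have hg0 : g 0 = 0 := by simp [hg]
    have hgN : g N = T := min_eq_right hTN
    rw [hg0, hgN]
    apply Finset.sum_congr _ (fun _ _ => rfl)
    ext t; simp only [Finset.mem_Ioc, Finset.mem_Icc]; omega
  -- per-block bound
  have hblock : ∀ i ∈ Finset.Icc 1 N,
      ∑ t ∈ Finset.Ioc (g (i-1)) (g i),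
        (muReward b lam γ πstar t - muReward b lam γ πw t) ≤ C := by
    intro i hi
    rw [Finset.mem_Icc] at hi
    obtain ⟨hi1, hiN⟩ := hi
    have hmT : (i-1)*w < T := hblockLt i hi1 hiN
    have hgi1 : g (i-1) = (i-1)*w := min_eq_left hmT.le
    set m := (i-1)*w with hm
    set e := min (i*w) T with he
    have hgi : g i = e := rfl
    have hme : m ≤ e := le_min (by rw [hm]; exact Nat.mul_le_mul_right w (by omega)) hmT.le
    have heT : e ≤ T := min_le_right _ _
    set σ : ℕ → ℕ := fun t => if t ≤ m then πw t else πstar t with hσ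
    have hσval : ∀ t ∈ Finset.Icc 1 T, σ t ∈ Finset.Icc 1 K := by
      intro t ht
      by_cases h : t ≤ m
      · simpa [hσ, h] using hwValid t ht
      · simpa [hσ, h] using hstarValid t ht
    have hσagree : ∀ t ∈ Finset.Icc 1 (min ((i-1)*w) T), σ t = πw t := by
      intro t ht
      rw [min_eq_left hmT.le, Finset.mem_Icc] at ht
      simp [hσ, ht.2]
    have hl := hlook i (Finset.mem_Icc.mpr ⟨hi1, hiN⟩) σ hσval hσagree
    rw [min_eq_left hmT.le] at hl
    have hIcc : Finset.Icc (m+1) e = Finset.Ioc m e := Finset.Icc_add_one_left_eq_Ioc m e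
    rw [hIcc] at hl
    rw [hgi1, hgi]
    calc ∑ t ∈ Finset.Ioc m e, (muReward b lam γ πstar t - muReward b lam γ πw t)
        ≤ ∑ t ∈ Finset.Ioc m e, (muReward b lam γ πstar t - muReward b lam γ σ t) := by
          rw [Finset.sum_sub_distrib, Finset.sum_sub_distrib]
          linarith [hl]
      _ ≤ ∑ t ∈ Finset.Ioc m e, lamBar * ∑ s ∈ Finset.Icc 1 m, γbar^(t-s) := by
          apply Finset.sum_le_sum
          intro t ht
          rw [Finset.mem_Ioc] at ht
          obtain ⟨hmt, hte⟩ := ht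
          have htT : t ∈ Finset.Icc 1 T := Finset.mem_Icc.mpr ⟨by omega, le_trans hte heT⟩
          have hσt : σ t = πstar t := if_neg (by omega)
          have hkmem := hstarValid t htT
          have hγk' := hγk _ hkmem
          have hlamk' := hlamk _ hkmem
          simp only [muReward, hσt]
          set S1 := ∑ s ∈ Finset.Icc 1 (t-1), (γ (πstar t))^(t-s) *
            (if πstar s = πstar t then 1 else 0) with hS1
          set S2 := ∑ s ∈ Finset.Icc 1 (t-1), (γ (πstar t))^(t-s) *
            (if σ s = πstar t then 1 else 0) with hS2
          have hB0 : (0:ℝ) ≤ ∑ s ∈ Finset.Icc 1 m, γbar^(t-s) :=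
            Finset.sum_nonneg (fun s _ => pow_nonneg hγ0 _)
          have hSd : S2 - S1 ≤ ∑ s ∈ Finset.Icc 1 m, γbar^(t-s) := by
            rw [hS1, hS2, ← Finset.sum_sub_distrib]
            have hstep : ∀ s ∈ Finset.Icc 1 (t-1),
                (γ (πstar t))^(t-s) * (if σ s = πstar t then 1 else 0)
                - (γ (πstar t))^(t-s) * (if πstar s = πstar t then 1 else 0)
                ≤ (if s ≤ m then γbar^(t-s) else 0) := by
              intro s hs
              by_cases hsm : s ≤ m
              · simp only [hsm, if_true]
                have hp : (γ (πstar t))^(t-s) ≤ γbar^(t-s) :=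
                  pow_le_pow_left₀ hγk'.1 hγk'.2 _
                have hp0 : (0:ℝ) ≤ (γ (πstar t))^(t-s) := pow_nonneg hγk'.1 _
                by_cases h1 : σ s = πstar t <;> by_cases h2 : πstar s = πstar t <;>
                  simp [h1, h2] <;> linarith
              · have hss : σ s = πstar s := if_neg hsm
                simp [hsm, hss]
            calc ∑ s ∈ Finset.Icc 1 (t-1),
                  ((γ (πstar t))^(t-s) * (if σ s = πstar t then 1 else 0)
                  - (γ (πstar t))^(t-s) * (if πstar s = πstar t then 1 else 0))
                ≤ ∑ s ∈ Finset.Icc 1 (t-1), (if s ≤ m then γbar^(t-s) else 0) :=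
                  Finset.sum_le_sum hstep
              _ = ∑ s ∈ Finset.Icc 1 m, (if s ≤ m then γbar^(t-s) else 0) := by
                  refine (Finset.sum_subset (Finset.Icc_subset_Icc_right (by omega)) ?_).symm
                  intro s hs hns
                  rw [Finset.mem_Icc] at hs
                  rw [Finset.mem_Icc] at hns
                  rw [if_neg (by omega)]
              _ = ∑ s ∈ Finset.Icc 1 m, γbar^(t-s) :=
                  Finset.sum_congr rfl (fun s hs => if_pos (Finset.mem_Icc.mp hs).2)
          have hfin : lam (πstar t) * (S2 - S1) ≤ lamBar * ∑ s ∈ Finset.Icc 1 m, γbar^(t-s) := by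
            calc lam (πstar t) * (S2 - S1)
                ≤ lam (πstar t) * ∑ s ∈ Finset.Icc 1 m, γbar^(t-s) :=
                  mul_le_mul_of_nonneg_left hSd hlamk'.1
              _ ≤ lamBar * ∑ s ∈ Finset.Icc 1 m, γbar^(t-s) :=
                  mul_le_mul_of_nonneg_right hlamk'.2 hB0
          linarith [hfin]
      _ ≤ C := by
          rw [← Finset.mul_sum]
          by_cases hm0 : m = 0
          · simp only [hm0]
            simp
            exact hC0
          · have hmw : w ≤ m := by
              have hi2 : 2 ≤ i := by
                by_contra hcon
                have hieq : i = 1 := by omega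
                rw [hieq] at hm
                simp at hm
                omega
              calc w = 1 * w := (one_mul w).symm
                _ ≤ (i-1)*w := Nat.mul_le_mul_right w (by omega)
                _ = m := hm.symm
            have hsum1 : ∀ t ∈ Finset.Ioc m e,
                (∑ s ∈ Finset.Icc 1 m, γbar^(t-s)) ≤ γbar^(t-m)/(1-γbar) := fun t ht =>
              Bbound γbar hγ0 hγ1 m t (Finset.mem_Ioc.mp ht).1
            calc lamBar * ∑ t ∈ Finset.Ioc m e, (∑ s ∈ Finset.Icc 1 m, γbar^(t-s))
                ≤ lamBar * ∑ t ∈ Finset.Ioc m e, γbar^(t-m)/(1-γbar) :=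
                  mul_le_mul_of_nonneg_left (Finset.sum_le_sum hsum1) hlam0
              _ = lamBar * ((γbar * (1 - γbar^(e-m))/(1-γbar)) / (1-γbar)) := by
                  rw [← Finset.sum_div, Tbound γbar hγ1 m e]
              _ ≤ C := by
                  rw [hC]
                  have hle : γbar^(T-w) ≤ γbar^(e-m) :=
                    pow_le_pow_of_le_one hγ0 hγ1.le (by omega)
                  have h1 : lamBar * (γbar * (1 - γbar^(e-m)) / (1-γbar) / (1-γbar))
                      = lamBar * γbar * (1 - γbar^(e-m)) / (1-γbar)^2 := by
                    rw [div_div, ← sq, mul_div_assoc', ← mul_assoc]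
                  rw [h1]
                  gcongr
  calc cumG b lam γ πstar T - cumG b lam γ πw T
      = ∑ i ∈ Finset.Icc 1 N, ∑ t ∈ Finset.Ioc (g (i-1)) (g i),
          (muReward b lam γ πstar t - muReward b lam γ πw t) := by
        simp only [cumG]
        rw [← Finset.sum_sub_distrib,
          ← hdecomp (fun t => muReward b lam γ πstar t - muReward b lam γ πw t)]
    _ ≤ ∑ _i ∈ Finset.Icc 1 N, C := Finset.sum_le_sum hblock
    _ = (N : ℝ) * C := by
        rw [Finset.sum_const, Nat.card_Icc]
        simp [nsmul_eq_mul]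
end

section
/- For any two policies π, π' on horizon [T] that agree from time iw+1 onward (π'_{iw+1:T} = π_{iw+1:T}), the difference in cumulative rewards earned from time iw+1 to T satisfies Σ_{t=iw+1}^T [μ_{π_t,t}(u; π) - μ_{π_t,t}(u; π')] ≤ λ̄ γ̄ (1 - γ̄^{T-iw}) / (1-γ̄)^2, where μ_{k,t}(u;π) denotes arm k's reward at time t under the pull history induced by π. -/
private lemma geomIccSum (x : ℝ) (hx1 : x ≠ 1) (n : ℕ) :
    ∑ s ∈ Finset.Icc 1 n, x^s = x * (1 - x^n) / (1 - x) := by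
  induction n with
  | zero => simp
  | succ n ih =>
    rw [Finset.sum_Icc_succ_top (Nat.le_add_left 1 n), ih]
    have h : (1:ℝ) - x ≠ 0 := by intro h; apply hx1; linarith
    field_simp
    ring

private lemma geomRangeLe (x : ℝ) (hx0 : 0 ≤ x) (hx1 : x < 1) (n : ℕ) :
    ∑ j ∈ Finset.range n, x^j ≤ 1 / (1 - x) := by
  have h1 : (0:ℝ) < 1 - x := by linarith
  rw [geom_sum_eq (by linarith : x ≠ 1)]
  rw [show (x^n - 1)/(x - 1) = (1 - x^n)/(1 - x) by
    rw [div_eq_div_iff (by linarith) (by linarith)]; ring]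
  rw [div_le_div_iff₀ h1 h1]
  nlinarith [pow_nonneg hx0 n]

private lemma iccPowBound (x : ℝ) (hx0 : 0 ≤ x) (hx1 : x < 1) (N t : ℕ)
    (ht : N + 1 ≤ t) :
    ∑ i' ∈ Finset.Icc 1 N, x^(t - i') ≤ x^(t - N) / (1 - x) := by
  have h1 : (0:ℝ) < 1 - x := by linarith
  have hre : ∀ i' ∈ Finset.Icc 1 N, x^(t - i') = x^(t - N) * x^(N - i') := by
    intro i' hi'
    simp only [Finset.mem_Icc] at hi'
    rw [← pow_add]
    congr 1
    omega
  rw [Finset.sum_congr rfl hre, ← Finset.mul_sum]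
  have h2 : ∑ i' ∈ Finset.Icc 1 N, x^(N - i') = ∑ j ∈ Finset.range N, x^j := by
    rw [← Finset.Ico_add_one_right_eq_Icc, Finset.sum_Ico_eq_sum_range]
    rw [show N + 1 - 1 = N from rfl]
    rw [← Finset.sum_range_reflect (fun j => x^j) N]
    apply Finset.sum_congr rfl
    intro j hj
    simp only [Finset.mem_range] at hj
    congr 1
    omega
  rw [h2, div_eq_mul_one_div]
  exact mul_le_mul_of_nonneg_left (geomRangeLe x hx0 hx1 N) (pow_nonneg hx0 _)

/-- If two policies agree from time `i*w + 1` onward, the difference of their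
cumulative rewards over `[i*w+1, T]` is at most
`λ̄ γ̄ (1 - γ̄^{T-iw}) / (1-γ̄)²`. -/
theorem stmt10 (T i w : ℕ) (b lam γ : ℕ → ℝ) (γbar lamBar : ℝ)
    (hγ : ∀ k, 0 ≤ γ k ∧ γ k ≤ γbar) (hγbar : γbar ∈ Set.Ico (0:ℝ) 1)
    (hlam : ∀ k, 0 ≤ lam k ∧ lam k ≤ lamBar)
    (π π' : ℕ → ℕ)
    (hagree : ∀ t, i*w + 1 ≤ t → π t = π' t) :
    ∑ t ∈ Finset.Icc (i*w + 1) T, (muReward b lam γ π t - muReward b lam γ π' t) ≤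
      lamBar * γbar * (1 - γbar^(T - i*w)) / (1 - γbar)^2 := by
  set N := i * w with hN
  obtain ⟨hγ0, hγ1⟩ := hγbar
  have h1γ : (0:ℝ) < 1 - γbar := by linarith
  have hlam0 : 0 ≤ lamBar := le_trans (hlam 0).1 (hlam 0).2
  -- per-time-step bound
  have hper : ∀ t ∈ Finset.Icc (N+1) T,
      muReward b lam γ π t - muReward b lam γ π' t ≤
      lamBar * (γbar^(t - N) / (1 - γbar)) := by
    intro t ht
    simp only [Finset.mem_Icc] at ht
    have hk : π' t = π t := (hagree t ht.1).symm
    unfold muReward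
    rw [hk]
    set S := ∑ i' ∈ Finset.Icc 1 (t-1), (γ (π t))^(t-i') * (if π i' = π t then (1:ℝ) else 0) with hS
    set S' := ∑ i' ∈ Finset.Icc 1 (t-1), (γ (π t))^(t-i') * (if π' i' = π t then (1:ℝ) else 0) with hS'
    have heq : b (π t) - lam (π t) * S - (b (π t) - lam (π t) * S') = lam (π t) * (S' - S) := by
      ring
    rw [heq]
    have hSS : S' - S ≤ γbar^(t - N) / (1 - γbar) := by
      rw [hS, hS', ← Finset.sum_sub_distrib]
      have hterm : ∀ i' ∈ Finset.Icc 1 (t-1),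
          (γ (π t))^(t-i') * (if π' i' = π t then (1:ℝ) else 0) -
          (γ (π t))^(t-i') * (if π i' = π t then (1:ℝ) else 0) ≤
          (if i' ≤ N then γbar^(t-i') else 0) := by
        intro i' hi'
        by_cases h : i' ≤ N
        · simp only [h, if_true]
          have hg0 : 0 ≤ γ (π t) := (hγ _).1
          have hgp : (γ (π t))^(t-i') ≤ γbar^(t-i') :=
            pow_le_pow_left₀ hg0 (hγ _).2 _
          have hp0 : 0 ≤ (γ (π t))^(t-i') := pow_nonneg hg0 _
          have hχ' : (if π' i' = π t then (1:ℝ) else 0) ≤ 1 := by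
            split <;> norm_num
          have hχ : (0:ℝ) ≤ (if π i' = π t then (1:ℝ) else 0) := by
            split <;> norm_num
          nlinarith
        · simp only [h, if_false]
          rw [hagree i' (by omega)]
          simp
      calc ∑ i' ∈ Finset.Icc 1 (t-1),
            ((γ (π t))^(t-i') * (if π' i' = π t then (1:ℝ) else 0) -
             (γ (π t))^(t-i') * (if π i' = π t then (1:ℝ) else 0))
          ≤ ∑ i' ∈ Finset.Icc 1 (t-1), (if i' ≤ N then γbar^(t-i') else 0) :=
            Finset.sum_le_sum hterm
        _ = ∑ i' ∈ (Finset.Icc 1 (t-1)).filter (· ≤ N), γbar^(t-i') := by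
            rw [Finset.sum_filter]
        _ ≤ ∑ i' ∈ Finset.Icc 1 N, γbar^(t-i') := by
            apply Finset.sum_le_sum_of_subset_of_nonneg
            · intro x hx
              simp only [Finset.mem_filter, Finset.mem_Icc] at hx ⊢
              exact ⟨hx.1.1, hx.2⟩
            · intro x _ _
              exact pow_nonneg hγ0 _
        _ ≤ γbar^(t - N) / (1 - γbar) := iccPowBound γbar hγ0 hγ1 N t ht.1
    have hbnd0 : 0 ≤ γbar^(t - N) / (1 - γbar) :=
      div_nonneg (pow_nonneg hγ0 _) h1γ.le
    calc lam (π t) * (S' - S)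
        ≤ lam (π t) * (γbar^(t - N) / (1 - γbar)) :=
          mul_le_mul_of_nonneg_left hSS (hlam _).1
      _ ≤ lamBar * (γbar^(t - N) / (1 - γbar)) :=
          mul_le_mul_of_nonneg_right (hlam _).2 hbnd0
  calc ∑ t ∈ Finset.Icc (N+1) T, (muReward b lam γ π t - muReward b lam γ π' t)
      ≤ ∑ t ∈ Finset.Icc (N+1) T, lamBar * (γbar^(t - N) / (1 - γbar)) :=
        Finset.sum_le_sum hper
    _ = (lamBar / (1 - γbar)) * ∑ t ∈ Finset.Icc (N+1) T, γbar^(t - N) := by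
        rw [Finset.mul_sum]
        apply Finset.sum_congr rfl
        intro t _
        ring
    _ = (lamBar / (1 - γbar)) * ∑ s ∈ Finset.Icc 1 (T - N), γbar^s := by
        congr 1
        rw [← Finset.Ico_add_one_right_eq_Icc, ← Finset.Ico_add_one_right_eq_Icc,
          Finset.sum_Ico_eq_sum_range, Finset.sum_Ico_eq_sum_range]
        rw [show T + 1 - (N + 1) = T - N by omega, show T - N + 1 - 1 = T - N from rfl]
        apply Finset.sum_congr rfl
        intro j hj
        congr 1
        omega
    _ = lamBar * γbar * (1 - γbar^(T - N)) / (1 - γbar)^2 := by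
        rw [geomIccSum γbar (by linarith) (T - N)]
        field_simp
end

section
/- Let X ~ N(a, b) with b > 0. Then for any θ ∈ [0,1], P(|X| ≥ √(θ(a² + b))) ≥ (1-θ)²/9. -/
/-! Apply Paley–Zygmund to `Z = X²`. Differentiating the moment generating function
`t ↦ exp(a t + b t²/2)` gives `E[X²] = a² + b` and `E[X⁴] = a⁴ + 6a²b + 3b² ≤ 9 (a² + b)²`,
so the Paley–Zygmund ratio `(E Z)² / E[Z²]` is at least `1/9`. -/

open MeasureTheory ProbabilityTheory Polynomial
open scoped NNReal
open Real (exp)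

section PaleyZygmund

variable {Ω : Type*} [MeasurableSpace Ω] {μ : Measure Ω}

lemma sq_setIntegral_le_integral_sq_mul_measureReal [IsFiniteMeasure μ] {Z : Ω → ℝ}
    (hZ : 0 ≤ᵐ[μ] Z) (hZ2 : MemLp Z 2 μ) {s : Set Ω} (hs : MeasurableSet s) :
    (∫ ω in s, Z ω ∂μ) ^ 2 ≤ (∫ ω, Z ω ^ 2 ∂μ) * μ.real s := by
  have hind : MemLp (s.indicator (fun _ => (1 : ℝ))) (ENNReal.ofReal 2) μ := by
    simpa using (memLp_const (1 : ℝ)).indicator hs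
  have h := integral_mul_le_Lp_mul_Lq_of_nonneg Real.HolderConjugate.two_two hZ
    (Filter.Eventually.of_forall fun _ => Set.indicator_nonneg (fun _ _ => zero_le_one) _)
    (by simpa using hZ2) hind
  have hlhs : ∫ ω, Z ω * s.indicator (fun _ => 1) ω ∂μ = ∫ ω in s, Z ω ∂μ := by
    rw [← integral_indicator hs]
    congr 1 with ω
    by_cases hω : ω ∈ s <;> simp [hω]
  have hrhs : ∫ ω, s.indicator (fun _ => (1 : ℝ)) ω ^ 2 ∂μ = μ.real s := by
    rw [← integral_indicator_one hs]
    congr 1 with ω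
    by_cases hω : ω ∈ s <;> simp [hω]
  simp only [hlhs, hrhs, Real.rpow_two, ← Real.sqrt_eq_rpow] at h
  have hI : 0 ≤ ∫ ω in s, Z ω ∂μ := setIntegral_nonneg_of_ae_restrict (ae_restrict_of_ae hZ)
  calc (∫ ω in s, Z ω ∂μ) ^ 2 ≤ (√(∫ ω, Z ω ^ 2 ∂μ) * √(μ.real s)) ^ 2 :=
        pow_le_pow_left₀ hI h 2
    _ = _ := by
      rw [mul_pow, Real.sq_sqrt (integral_nonneg fun ω => sq_nonneg _),
        Real.sq_sqrt measureReal_nonneg]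

theorem paley_zygmund [IsProbabilityMeasure μ] {Z : Ω → ℝ} (hZ : 0 ≤ᵐ[μ] Z)
    (hZm : Measurable Z) (hZ2 : MemLp Z 2 μ) {θ : ℝ} (hθ₀ : 0 ≤ θ) (hθ₁ : θ ≤ 1) :
    (1 - θ) ^ 2 * (∫ ω, Z ω ∂μ) ^ 2
      ≤ (∫ ω, Z ω ^ 2 ∂μ) * μ.real {ω | θ * ∫ ω, Z ω ∂μ ≤ Z ω} := by
  set m := ∫ ω, Z ω ∂μ
  set A := {ω | θ * m ≤ Z ω}
  have hA : MeasurableSet A := measurableSet_le measurable_const hZm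
  have hm : 0 ≤ m := integral_nonneg_of_ae hZ
  have hint := hZ2.integrable one_le_two
  have hcompl : ∫ ω in Aᶜ, Z ω ∂μ ≤ θ * m := calc
    ∫ ω in Aᶜ, Z ω ∂μ ≤ ∫ ω in Aᶜ, θ * m ∂μ :=
      setIntegral_mono_on hint.integrableOn integrableOn_const hA.compl
        fun ω hω => (not_le.1 (Set.notMem_ofPred_iff.1 hω)).le
    _ = μ.real Aᶜ * (θ * m) := by rw [setIntegral_const, smul_eq_mul]
    _ ≤ θ * m := mul_le_of_le_one_left (by positivity) measureReal_le_one
  have hmass : (1 - θ) * m ≤ ∫ ω in A, Z ω ∂μ := by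
    linarith [integral_add_compl hA hint]
  calc (1 - θ) ^ 2 * m ^ 2 = ((1 - θ) * m) ^ 2 := by ring
    _ ≤ (∫ ω in A, Z ω ∂μ) ^ 2 := pow_le_pow_left₀ (by nlinarith) hmass 2
    _ ≤ _ := sq_setIntegral_le_integral_sq_mul_measureReal hZ hZ2 hA

end PaleyZygmund

section GaussianMoments

variable (m : ℝ) (v : ℝ≥0)

/-- `(P(t) exp(m t + v t²/2))' = (P' + P · (m + v X))(t) exp(m t + v t²/2)`. -/
noncomputable def gaussianMGFDerivStep (P : ℝ[X]) : ℝ[X] :=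
  derivative P + P * (C m + C (v : ℝ) * X)

lemma deriv_eval_mul_gaussianMGF (P : ℝ[X]) :
    deriv (fun t => P.eval t * exp (m * t + v * t ^ 2 / 2))
      = fun t => (gaussianMGFDerivStep m v P).eval t * exp (m * t + v * t ^ 2 / 2) := by
  funext t
  have hexponent : HasDerivAt (fun t => m * t + v * t ^ 2 / 2) (m + v * t) t :=
    (((hasDerivAt_id t).const_mul m).add
      (((hasDerivAt_pow 2 t).const_mul (v : ℝ)).div_const 2)).congr_deriv (by norm_num; ring)
  refine ((P.hasDerivAt t).mul hexponent.exp).deriv.trans ?_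
  simp only [gaussianMGFDerivStep, eval_add, eval_mul, eval_C, eval_X]
  ring

lemma iteratedDeriv_gaussianMGF (n : ℕ) :
    iteratedDeriv n (fun t => exp (m * t + v * t ^ 2 / 2))
      = fun t => ((gaussianMGFDerivStep m v)^[n] 1).eval t * exp (m * t + v * t ^ 2 / 2) := by
  induction n with
  | zero => simp
  | succ n ih =>
    rw [iteratedDeriv_succ, ih, deriv_eval_mul_gaussianMGF, Function.iterate_succ_apply']

lemma integral_pow_gaussianReal (n : ℕ) :
    ∫ x, x ^ n ∂gaussianReal m v = ((gaussianMGFDerivStep m v)^[n] 1).eval 0 := by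
  have h := iteratedDeriv_mgf_zero (X := id) (μ := gaussianReal m v) (by simp) n
  rw [mgf_id_gaussianReal, iteratedDeriv_gaussianMGF] at h
  simpa using h.symm

lemma integral_sq_gaussianReal : ∫ x, x ^ 2 ∂gaussianReal m v = m ^ 2 + v := by
  rw [integral_pow_gaussianReal]
  simp only [Function.iterate_succ_apply', Function.iterate_zero_apply, gaussianMGFDerivStep,
    derivative_mul, derivative_add, derivative_C, derivative_X, derivative_one, derivative_zero,
    eval_add, eval_mul, eval_C, eval_X, eval_one, eval_zero]
  ring

lemma integral_pow_four_gaussianReal :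
    ∫ x, x ^ 4 ∂gaussianReal m v = m ^ 4 + 6 * m ^ 2 * v + 3 * v ^ 2 := by
  rw [integral_pow_gaussianReal]
  simp only [Function.iterate_succ_apply', Function.iterate_zero_apply, gaussianMGFDerivStep,
    derivative_mul, derivative_add, derivative_C, derivative_X, derivative_one, derivative_zero,
    eval_add, eval_mul, eval_C, eval_X, eval_one, eval_zero]
  ring

lemma memLp_sq_gaussianReal : MemLp (fun x : ℝ => x ^ 2) 2 (gaussianReal m v) := by
  rw [memLp_two_iff_integrable_sq (by fun_prop)]
  simpa [← pow_mul] using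
    integrable_pow_of_mem_interior_integrableExpSet (X := id) (μ := gaussianReal m v) (by simp) 4

end GaussianMoments

/-- Gaussian small-ball bound (Paley–Zygmund for Gaussians):
if `X ~ N(a, b)` with `b > 0`, then for `θ ∈ [0,1]`,
`P(|X| ≥ √(θ(a² + b))) ≥ (1-θ)²/9`. -/
theorem stmt11 (a : ℝ) (b : NNReal) (hb : 0 < b) (θ : ℝ) (hθ : θ ∈ Set.Icc (0:ℝ) 1) :
    ENNReal.ofReal ((1 - θ)^2 / 9) ≤
      gaussianReal a b {x : ℝ | Real.sqrt (θ * (a^2 + b)) ≤ |x|} := by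
  obtain ⟨hθ₀, hθ₁⟩ := hθ
  have hpz := paley_zygmund (μ := gaussianReal a b) (Z := fun x => x ^ 2)
    (Filter.Eventually.of_forall fun x => sq_nonneg x) (by fun_prop)
    (memLp_sq_gaussianReal a b) hθ₀ hθ₁
  simp only [← pow_mul, integral_sq_gaussianReal, integral_pow_four_gaussianReal] at hpz
  simp only [Real.sqrt_le_left, abs_nonneg, sq_abs]
  have hm2 : 0 < a ^ 2 + (b : ℝ) := by positivity
  have hm4 : a ^ 4 + 6 * a ^ 2 * b + 3 * b ^ 2 ≤ 9 * (a ^ 2 + (b : ℝ)) ^ 2 := by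
    nlinarith [sq_nonneg a, sq_nonneg (b : ℝ)]
  have hprob : (1 - θ) ^ 2 / 9 ≤ (gaussianReal a b).real {x | θ * (a ^ 2 + b) ≤ x ^ 2} := by
    rw [div_le_iff₀ (by norm_num)]
    refine le_of_mul_le_mul_left ?_ (pow_pos hm2 2)
    nlinarith [hm4, measureReal_nonneg (μ := gaussianReal a b)
      (s := {x | θ * (a ^ 2 + b) ≤ x ^ 2})]
  exact ENNReal.ofReal_le_of_le_toReal hprob
end

section
/- Let w = (w₁, w₂) be a unit vector in ℝ², and let q, Γ be real numbers with Γ ≥ 0. Then for every ε ∈ (0,1), (w₁ q + w₂)² + w₁² Γ ≥ min{1 - ε, Γ - (1/ε - 1) q²}. -/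
/-- Key inequality for the block martingale small-ball condition: for a unit
vector `(w₁, w₂)`, `q ∈ ℝ`, `Γ ≥ 0` and `ε ∈ (0,1)`,
`(w₁ q + w₂)² + w₁² Γ ≥ min(1-ε, Γ - (1/ε - 1) q²)`. -/
theorem stmt14 (w1 w2 q Γ ε : ℝ) (hw : w1^2 + w2^2 = 1) (hΓ : 0 ≤ Γ)
    (hε : ε ∈ Set.Ioo (0:ℝ) 1) :
    min (1 - ε) (Γ - (1/ε - 1) * q^2) ≤ (w1*q + w2)^2 + w1^2 * Γ := by
  obtain ⟨hε0, hε1⟩ := hε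
  set m := min (1 - ε) (Γ - (1/ε - 1) * q^2) with hm
  have h1 : m ≤ 1 - ε := min_le_left _ _
  have h2 : m ≤ Γ - (1/ε - 1) * q^2 := min_le_right _ _
  have hcombo : m ≤ w2^2 * (1 - ε) + w1^2 * (Γ - (1/ε - 1) * q^2) := by
    have e1 : w2^2 * m ≤ w2^2 * (1 - ε) := mul_le_mul_of_nonneg_left h1 (sq_nonneg _)
    have e2 : w1^2 * m ≤ w1^2 * (Γ - (1/ε - 1) * q^2) :=
      mul_le_mul_of_nonneg_left h2 (sq_nonneg _)
    nlinarith [e1, e2]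
  refine hcombo.trans ?_
  have key : 0 ≤ (1/ε) * (ε*w2 + w1*q)^2 := by positivity
  have hεne : ε ≠ 0 := ne_of_gt hε0
  have expand : (1/ε) * (ε*w2 + w1*q)^2
      = 2*w1*w2*q + ε*w2^2 + (1/ε)*w1^2*q^2 := by field_simp; ring
  have h1e : (1/ε - 1) * q^2 = (1/ε)*q^2 - q^2 := by ring
  nlinarith [key, expand]
end
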